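/- arXiv:0805.3382 — 7 statements merged into one kernel-verified Lean document; each statement's English description precedes it below -/
import Mathlib

section
/- Let n ≥ 1 and let q_i(λ) = (−1)^i Σ_{1≤s_1<…<s_i≤n} λ_{s_1}⋯λ_{s_i} (i = 1,…,n) be the Viète polynomials of λ = (λ_1,…,λ_n) ∈ ℝ^n. Then for all r, s ∈ {1,…,n} and all λ ∈ ℝ^n one has Σ_{i=1}^{n} (∂q_i/∂λ_r)(λ) · λ_s^{n−i} = −δ_{rs} · Π_{j≠r} (λ_r − λ_j). In particular, for pairwise distinct λ_1,…,λ_n this exhibits the inverse of the Vandermonde matrix (λ_r^{n−i})_{i,r}. -/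
/-!
Since `q_i` is affine in `λ_r`, with slope `(-1)^i e_{i-1}` of the remaining coordinates,
`∑_i (∂q_i/∂λ_r) x^{n-i} = -∏_{j ≠ r} (x - λ_j)` by Vieta's formula. At `x = λ_s` the product
vanishes for `s ≠ r` and is `Δ_r(λ)` for `s = r`.
-/

open scoped BigOperators

/-- The Viète polynomials: `vieta n lam i` is
`q_{i+1}(λ) = (-1)^{i+1} ∑_{s_1<…<s_{i+1}} λ_{s_1}⋯λ_{s_{i+1}}` (0-based index `i`). -/
noncomputable def vieta (n : ℕ) (lam : Fin n → ℝ) (i : Fin n) : ℝ :=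
  (-1 : ℝ) ^ ((i : ℕ) + 1) *
    ∑ s ∈ (Finset.univ : Finset (Fin n)).powersetCard ((i : ℕ) + 1), ∏ j ∈ s, lam j

/-- Partial derivative of `f : ℝ^n → ℝ` with respect to the `r`-th coordinate at `x`. -/
noncomputable def pderiv' (n : ℕ) (f : (Fin n → ℝ) → ℝ) (r : Fin n) (x : Fin n → ℝ) : ℝ :=
  deriv (fun t => f (Function.update x r t)) (x r)

/-- `Δ_r(λ) = ∏_{j ≠ r} (λ_r − λ_j)`. -/
noncomputable def Delta (n : ℕ) (lam : Fin n → ℝ) (r : Fin n) : ℝ :=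
  ∏ j ∈ Finset.univ.erase r, (lam r - lam j)

open Finset Polynomial

namespace Multiset

theorem esymm_cons_succ {R : Type*} [CommSemiring R] (a : R) (s : Multiset R) (k : ℕ) :
    (a ::ₘ s).esymm (k + 1) = s.esymm (k + 1) + a * s.esymm k := by
  simp [esymm, map_map, sum_map_mul_left]

theorem prod_map_sub_eq_sum_esymm {R : Type*} [CommRing R] (s : Multiset R) (x : R) :
    (s.map (x - ·)).prod =
      ∑ k ∈ Finset.range (card s + 1), (-1) ^ k * s.esymm k * x ^ (card s - k) := by
  simpa [eval_multiset_prod, eval_finsetSum, mul_assoc] using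
    congrArg (eval x) (prod_X_sub_X_eq_sum_esymm s)

end Multiset

theorem Finset.map_update_val_of_mem {ι M : Type*} [DecidableEq ι] {s : Finset ι} {r : ι}
    (hr : r ∈ s) (f : ι → M) (t : M) :
    s.val.map (Function.update f r t) = t ::ₘ (s.erase r).val.map f := by
  rw [← Multiset.cons_erase (s := s.val) hr, Multiset.map_cons, Function.update_self,
    erase_val]
  congr 1
  exact Multiset.map_congr rfl fun j hj => Function.update_of_ne (ne_of_mem_erase hj) t f

theorem hasDerivAt_esymm_map_update {𝕜 ι : Type*} [NontriviallyNormedField 𝕜] [DecidableEq ι]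
    {s : Finset ι} {r : ι} (hr : r ∈ s) (f : ι → 𝕜) (k : ℕ) (t : 𝕜) :
    HasDerivAt (fun t => (s.val.map (Function.update f r t)).esymm (k + 1))
      (((s.erase r).val.map f).esymm k) t := by
  simp only [map_update_val_of_mem hr, Multiset.esymm_cons_succ]
  exact ((hasDerivAt_id t).mul_const _).const_add _ |>.congr_deriv (one_mul _)

theorem vieta_eq_esymm (n : ℕ) (lam : Fin n → ℝ) (i : Fin n) :
    vieta n lam i = (-1) ^ ((i : ℕ) + 1) * (univ.val.map lam).esymm (i + 1) := by
  rw [vieta, esymm_map_val]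

theorem pderiv'_vieta (n : ℕ) (lam : Fin n → ℝ) (r i : Fin n) :
    pderiv' n (fun l => vieta n l i) r lam =
      (-1) ^ ((i : ℕ) + 1) * ((univ.erase r).val.map lam).esymm i := by
  simp only [pderiv', vieta_eq_esymm]
  exact ((hasDerivAt_esymm_map_update (mem_univ r) lam i (lam r)).const_mul _).deriv

theorem sum_pderiv'_vieta_mul_pow (n : ℕ) (lam : Fin n → ℝ) (r : Fin n) (x : ℝ) :
    ∑ i : Fin n, pderiv' n (fun l => vieta n l i) r lam * x ^ (n - 1 - (i : ℕ))
      = -∏ j ∈ univ.erase r, (x - lam j) := by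
  set E := (univ.erase r).val.map lam
  have hE : Multiset.card E = n - 1 := by simp [E]
  have hprod : ∏ j ∈ univ.erase r, (x - lam j) = (E.map (x - ·)).prod := by
    rw [Multiset.map_map, Function.comp_def, prod_map_val]
  rw [hprod, Multiset.prod_map_sub_eq_sum_esymm, hE, Nat.sub_add_cancel r.pos,
    ← Fin.sum_univ_eq_sum_range, ← sum_neg_distrib]
  refine sum_congr rfl fun i _ => ?_
  rw [pderiv'_vieta, pow_succ]
  ring

theorem viete_vandermonde_inverse_general (n : ℕ) (lam : Fin n → ℝ) (r s : Fin n) :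
    ∑ i : Fin n, pderiv' n (fun l => vieta n l i) r lam * lam s ^ (n - 1 - (i : ℕ))
      = -(if r = s then (1 : ℝ) else 0) * Delta n lam r := by
  rw [sum_pderiv'_vieta_mul_pow]
  split_ifs with hrs
  · subst hrs
    simp [Delta]
  · rw [prod_eq_zero (f := (lam s - lam ·)) (mem_erase.2 ⟨Ne.symm hrs, mem_univ s⟩) (sub_self _)]
    simp

/-- For all `r, s` and all `λ ∈ ℝ^n`:
`∑_{i=1}^n (∂q_i/∂λ_r)(λ) · λ_s^{n−i} = −δ_{rs} · ∏_{j≠r}(λ_r − λ_j)`. -/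
theorem viete_vandermonde_inverse (n : ℕ) (hn : 1 ≤ n) (lam : Fin n → ℝ) (r s : Fin n) :
    ∑ i : Fin n, pderiv' n (fun l => vieta n l i) r lam * lam s ^ (n - 1 - (i : ℕ))
      = -(if r = s then (1 : ℝ) else 0) * Delta n lam r :=
  viete_vandermonde_inverse_general n lam r s
end

section
/- Let n ≥ 1. Define the separable potentials V_i^{(k)} : ℝ^n → ℝ (i = 1,…,n, k ≥ 0) recursively by V_i^{(0)}(q) = δ_{in} and V_i^{(k+1)} = V_{i+1}^{(k)} − q_i V_1^{(k)}, where V_{n+1}^{(k)} := 0. Then for every λ ∈ ℝ^n, every k ≥ 0 and every r ∈ {1,…,n}: Σ_{j=1}^{n} V_j^{(k)}(q(λ)) · λ_r^{n−j} = λ_r^{k}, where q(λ) = (q_1(λ),…,q_n(λ)) are the Viète polynomials of λ. -/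
open scoped BigOperators

/-- The separable potentials `V_i^{(k)}` (0-based index `i`, so `Vpot n k q i = V_{i+1}^{(k)}(q)`),
defined by `V_i^{(0)} = δ_{in}` and `V_i^{(k+1)} = V_{i+1}^{(k)} − q_i V_1^{(k)}`,
with the convention `V_{n+1}^{(k)} = 0`. -/
noncomputable def Vpot (n : ℕ) : ℕ → (Fin n → ℝ) → Fin n → ℝ
  | 0, _, i => if (i : ℕ) = n - 1 then 1 else 0
  | k + 1, q, i =>
      (if h : (i : ℕ) + 1 < n then Vpot n k q ⟨(i : ℕ) + 1, h⟩ else 0)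
        - q i * Vpot n k q ⟨0, i.pos⟩

/-!
The Viète polynomials are the coefficients of `∏ i, (X - λ_i) = X^n + q_1 X^{n-1} + ⋯ + q_n`,
so every `x = λ_r` satisfies `x^n = -∑_j q_j x^{n-j}`. Multiplying `S_k = ∑_j V_j^{(k)} x^{n-j}`
by `x` and eliminating `x^n` with this relation reproduces the recursion defining `V^{(k+1)}`,
so `S_{k+1} = x S_k`, and `S_0 = 1`.
-/

open Finset Polynomial

theorem pow_add_sum_vieta_mul_pow (n : ℕ) (lam : Fin n → ℝ) (x : ℝ) :
    x ^ n + ∑ j : Fin n, vieta n lam j * x ^ (n - 1 - (j : ℕ)) = ∏ i, (x - lam i) := by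
  set s := univ.val.map lam
  have hs : Multiset.card s = n := by simp [s]
  have h := congrArg (eval x) (Multiset.prod_X_sub_X_eq_sum_esymm s)
  rw [hs, sum_range_succ', ← Fin.sum_univ_eq_sum_range] at h
  simp only [eval_prod, Multiset.map_map, Function.comp_def, eval_sub, eval_X, eval_C,
    eval_add, eval_finsetSum, eval_mul, eval_pow, eval_neg, eval_one, s,
    ← prod_eq_multiset_prod] at h
  rw [h, add_comm]
  congr 1
  · refine sum_congr rfl fun j _ => ?_
    rw [vieta, ← Finset.esymm_map_val, Nat.sub_sub, Nat.add_comm 1, mul_assoc]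
  · simp [Multiset.esymm]

section
variable {R : Type*} [CommSemiring R] {m : ℕ} (x : R)

theorem mul_sum_mul_pow (f : Fin (m + 1) → R) :
    x * ∑ j, f j * x ^ (m - (j : ℕ))
      = f 0 * x ^ (m + 1) + ∑ j : Fin m, f j.succ * x ^ (m - (j : ℕ)) := by
  rw [Fin.sum_univ_succ, mul_add, mul_sum]
  congr 1
  · rw [Fin.val_zero, Nat.sub_zero, pow_succ']
    ring
  · refine sum_congr rfl fun j _ => ?_
    rw [Fin.val_succ, mul_left_comm, ← pow_succ', Nat.sub_add_eq, Nat.sub_add_cancel (by omega)]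

theorem sum_shift_mul_pow (f : Fin (m + 1) → R) :
    ∑ j : Fin (m + 1),
        (if h : (j : ℕ) + 1 < m + 1 then f ⟨j + 1, h⟩ else 0) * x ^ (m - (j : ℕ))
      = ∑ j : Fin m, f j.succ * x ^ (m - (j : ℕ)) := by
  rw [Fin.sum_univ_castSucc]
  simp [Fin.succ]

end

section
variable {m : ℕ} (q : Fin (m + 1) → ℝ) (x : ℝ)

theorem sum_Vpot_zero_mul_pow : ∑ j, Vpot (m + 1) 0 q j * x ^ (m - (j : ℕ)) = 1 := by
  rw [sum_eq_single (Fin.last m)]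
  · simp [Vpot]
  · intro j _ hj
    simp [Vpot, show (j : ℕ) ≠ m from fun h => hj (Fin.ext h)]
  · simp

theorem sum_Vpot_succ_mul_pow (hx : ∑ j, q j * x ^ (m - (j : ℕ)) = -x ^ (m + 1)) (k : ℕ) :
    ∑ j, Vpot (m + 1) (k + 1) q j * x ^ (m - (j : ℕ))
      = x * ∑ j, Vpot (m + 1) k q j * x ^ (m - (j : ℕ)) := by
  calc ∑ j, Vpot (m + 1) (k + 1) q j * x ^ (m - (j : ℕ))
      = ∑ j : Fin (m + 1),
            (if h : (j : ℕ) + 1 < m + 1 then Vpot (m + 1) k q ⟨j + 1, h⟩ else 0) * x ^ (m - (j : ℕ))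
          - Vpot (m + 1) k q ⟨0, m.succ_pos⟩ * ∑ j, q j * x ^ (m - (j : ℕ)) := by
        simp only [Vpot, sub_mul, sum_sub_distrib, mul_sum]
        congr 1
        exact sum_congr rfl fun j _ => by ring
    _ = Vpot (m + 1) k q ⟨0, m.succ_pos⟩ * x ^ (m + 1)
          + ∑ j : Fin m, Vpot (m + 1) k q j.succ * x ^ (m - (j : ℕ)) := by
        rw [sum_shift_mul_pow, hx]
        ring
    _ = x * ∑ j, Vpot (m + 1) k q j * x ^ (m - (j : ℕ)) := (mul_sum_mul_pow x _).symm

theorem sum_Vpot_mul_pow (hx : ∑ j, q j * x ^ (m - (j : ℕ)) = -x ^ (m + 1)) (k : ℕ) :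
    ∑ j, Vpot (m + 1) k q j * x ^ (m - (j : ℕ)) = x ^ k := by
  induction k with
  | zero => exact sum_Vpot_zero_mul_pow q x
  | succ k ih => rw [sum_Vpot_succ_mul_pow q x hx, ih, pow_succ']

end

theorem separable_potentials_generating_general (n : ℕ) (lam : Fin n → ℝ) (k : ℕ)
    (r : Fin n) :
    ∑ j : Fin n, Vpot n k (fun i => vieta n lam i) j * lam r ^ (n - 1 - (j : ℕ))
      = lam r ^ k := by
  obtain ⟨m, rfl⟩ : ∃ m, n = m + 1 := ⟨n - 1, by have := r.pos; omega⟩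
  have hroot := pow_add_sum_vieta_mul_pow (m + 1) lam (lam r)
  rw [prod_eq_zero (mem_univ r) (sub_self _), Nat.add_sub_cancel] at hroot
  simpa using sum_Vpot_mul_pow (vieta (m + 1) lam) (lam r) (eq_neg_of_add_eq_zero_right hroot) k

/-- For every `λ ∈ ℝ^n`, every `k ≥ 0` and every `r`:
`∑_{j=1}^n V_j^{(k)}(q(λ)) · λ_r^{n−j} = λ_r^k`, where `q(λ)` are the Viète polynomials. -/
theorem separable_potentials_generating (n : ℕ) (hn : 1 ≤ n) (lam : Fin n → ℝ) (k : ℕ)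
    (r : Fin n) :
    ∑ j : Fin n, Vpot n k (fun i => vieta n lam i) j * lam r ^ (n - 1 - (j : ℕ))
      = lam r ^ k :=
  separable_potentials_generating_general n lam k r
end

section
/- Let n ≥ 1 and let q_1,…,q_n : ℝ → ℝ be smooth functions of a variable x, with the convention q_α ≡ 0 for α > n. For i, j ∈ {1,…,n} define (Z_i^n[q])^j := (q_{j+i−1})_x + Σ_{k=1}^{j−1} ( q_k (q_{j+i−k−1})_x − q_{j+i−k−1} (q_k)_x ). Then (Z_i^n[q])^j = (Z_j^n[q])^i pointwise for all i, j ∈ {1,…,n}. -/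
open scoped BigOperators

/-- The `j`-th component of the `i`-th Killing vector field in Viète coordinates
(1-based indices `i`, `j`):
`(Z_i^n[q])^j = (q_{j+i−1})_x + ∑_{k=1}^{j−1}( q_k (q_{j+i−k−1})_x − q_{j+i−k−1}(q_k)_x )`. -/
noncomputable def Zcomp (q : ℕ → ℝ → ℝ) (i j : ℕ) (x : ℝ) : ℝ :=
  deriv (q (j + i - 1)) x +
    ∑ k ∈ Finset.Ico 1 j,
      (q k x * deriv (q (j + i - k - 1)) x - q (j + i - k - 1) x * deriv (q k) x)

/-- For smooth `q_1,…,q_n : ℝ → ℝ` (with `q_α ≡ 0` for `α > n`) the components of the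
Killing vector fields satisfy the symmetry `(Z_i^n[q])^j = (Z_j^n[q])^i`. -/
theorem killing_components_symmetric (n : ℕ) (hn : 1 ≤ n) (q : ℕ → ℝ → ℝ)
    (hsmooth : ∀ j : ℕ, ContDiff ℝ (⊤ : ℕ∞) (q j))
    (hzero : ∀ j : ℕ, n < j → q j = fun _ => 0) :
    ∀ i j : ℕ, 1 ≤ i → i ≤ n → 1 ≤ j → j ≤ n → ∀ x : ℝ,
      Zcomp q i j x = Zcomp q j i x := by
  intro i j hi hin hj hjn x
  wlog h : i ≤ j with H
  · exact (H n hn q hsmooth hzero j i hj hjn hi hin x (by omega)).symm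
  unfold Zcomp
  rw [show j + i = i + j by omega,
    ← Finset.Ico_union_Ico_eq_Ico hi h,
    Finset.sum_union (Finset.Ico_disjoint_Ico_consecutive 1 i j)]
  have hz : ∑ k ∈ Finset.Ico i j,
      (q k x * deriv (q (i + j - k - 1)) x - q (i + j - k - 1) x * deriv (q k) x) = 0 := by
    apply Finset.sum_involution (g := fun k _ => i + j - 1 - k)
    · intro a ha
      simp only [Finset.mem_Ico] at ha
      have h1 : i + j - (i + j - 1 - a) - 1 = a := by omega
      have h2 : i + j - 1 - a = i + j - a - 1 := by omega
      rw [h1, h2]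
      ring
    · intro a ha hne
      intro hga
      apply hne
      have h1 : i + j - a - 1 = a := by
        simp only [Finset.mem_Ico] at ha
        omega
      rw [h1]
      ring
    · intro a ha
      simp only [Finset.mem_Ico] at ha ⊢
      omega
    · intro a ha
      simp only [Finset.mem_Ico] at ha
      omega
  rw [hz, add_zero]
end

section
/- Let n ≥ 1. For smooth q = (q_1,…,q_n) : ℝ → ℝ^n (with the convention q_α ≡ 0 for α > n) define the Killing vector fields (Z_i^n[q])^j := (q_{j+i−1})_x + Σ_{k=1}^{j−1}( q_k (q_{j+i−k−1})_x − q_{j+i−k−1}(q_k)_x ). Then the vector fields commute: for all i, k ∈ {1,…,n}, all smooth q : ℝ → ℝ^n, all j ∈ {1,…,n} and all x ∈ ℝ, (d/dε)|_{ε=0} (Z_k^n[q + ε Z_i^n[q]])^j(x) = (d/dε)|_{ε=0} (Z_i^n[q + ε Z_k^n[q]])^j(x), i.e. the Gateaux derivative of Z_k^n at q in the direction Z_i^n[q] equals the Gateaux derivative of Z_i^n at q in the direction Z_k^n[q]. -/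
open scoped BigOperators

/-- The curve `q` perturbed in the direction of the `i`-th Killing vector field:
`q_j + ε (Z_i^n[q])^j` for `j ≤ n`, keeping the convention `q_α ≡ 0` for `α > n`. -/
noncomputable def perturb (n : ℕ) (q : ℕ → ℝ → ℝ) (i : ℕ) (ε : ℝ) : ℕ → ℝ → ℝ :=
  fun j x => if j ≤ n then q j x + ε * Zcomp q i j x else 0

noncomputable def pol (f : ℕ → ℝ) (L : ℕ) : Polynomial ℝ :=
  ∑ s ∈ Finset.range L, Polynomial.C (f s) * Polynomial.X ^ s

lemma pol_coeff (f : ℕ → ℝ) (L t : ℕ) : (pol f L).coeff t = if t < L then f t else 0 := by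
  unfold pol
  rw [Polynomial.finset_sum_coeff]
  simp only [Polynomial.coeff_C_mul, Polynomial.coeff_X_pow, mul_ite, mul_one, mul_zero]
  rw [Finset.sum_ite_eq (Finset.range L) t f]
  simp [Finset.mem_range]

/-- Reflection of an `Ico`-sum. -/
lemma sum_reflect (f : ℕ → ℝ) (s l r : ℕ) (hr : r ≤ s + 1) :
    ∑ u ∈ Finset.Ico l r, f (s - u) = ∑ u ∈ Finset.Ico (s + 1 - r) (s + 1 - l), f u := by
  apply Finset.sum_nbij' (fun u => s - u) (fun u => s - u)
  · intro u hu; simp only [Finset.mem_Ico] at *; omega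
  · intro u hu; simp only [Finset.mem_Ico] at *; omega
  · intro u hu; simp only [Finset.mem_Ico] at *; omega
  · intro u hu; simp only [Finset.mem_Ico] at *; omega
  · intro u _; rfl

lemma convL (f : ℕ → ℝ) (L1 : ℕ) (P : Polynomial ℝ) (s : ℕ) (hL1 : L1 ≤ s + 1) :
    (pol f L1 * P).coeff s = ∑ u ∈ Finset.Ico 0 L1, f u * P.coeff (s - u) := by
  rw [Polynomial.coeff_mul, Finset.Nat.sum_antidiagonal_eq_sum_range_succ_mk,
    ← Finset.sum_filter_add_sum_filter_not (Finset.range (s+1)) (fun u => u < L1)]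
  have e0 : ∑ u ∈ Finset.filter (fun u => ¬ u < L1) (Finset.range (s+1)),
      (pol f L1).coeff u * P.coeff (s - u) = 0 := by
    apply Finset.sum_eq_zero; intro u hu
    simp only [Finset.mem_filter, Finset.mem_range] at hu
    rw [pol_coeff, if_neg (by omega)]; ring
  rw [e0, add_zero]
  apply Finset.sum_nbij' (fun u => u) (fun u => u)
  · intro u hu; simp only [Finset.mem_filter, Finset.mem_range, Finset.mem_Ico] at *; omega
  · intro u hu; simp only [Finset.mem_filter, Finset.mem_range, Finset.mem_Ico] at *; omega
  · intro u _; rfl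
  · intro u _; rfl
  · intro u hu
    simp only [Finset.mem_filter, Finset.mem_range] at hu
    rw [pol_coeff, if_pos (by omega)]

lemma convR (g : ℕ → ℝ) (L2 : ℕ) (P : Polynomial ℝ) (s : ℕ) :
    (P * pol g L2).coeff s = ∑ u ∈ Finset.Ico (s + 1 - L2) (s + 1), P.coeff u * g (s - u) := by
  rw [Polynomial.coeff_mul, Finset.Nat.sum_antidiagonal_eq_sum_range_succ_mk,
    ← Finset.sum_filter_add_sum_filter_not (Finset.range (s+1)) (fun u => s + 1 - L2 ≤ u)]
  have e0 : ∑ u ∈ Finset.filter (fun u => ¬ s + 1 - L2 ≤ u) (Finset.range (s+1)),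
      P.coeff u * (pol g L2).coeff (s - u) = 0 := by
    apply Finset.sum_eq_zero; intro u hu
    simp only [Finset.mem_filter, Finset.mem_range] at hu
    rw [pol_coeff, if_neg (by omega)]; ring
  rw [e0, add_zero]
  apply Finset.sum_nbij' (fun u => u) (fun u => u)
  · intro u hu; simp only [Finset.mem_filter, Finset.mem_range, Finset.mem_Ico] at *; omega
  · intro u hu; simp only [Finset.mem_filter, Finset.mem_range, Finset.mem_Ico] at *; omega
  · intro u _; rfl
  · intro u _; rfl
  · intro u hu
    simp only [Finset.mem_filter, Finset.mem_range] at hu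
    rw [pol_coeff, if_pos (by omega)]

/-- `vv a b i m` : the value of the Killing field in abstract coordinates. -/
noncomputable def vv (a b : ℕ → ℝ) (i m : ℕ) : ℝ :=
  b (m + i - 1) + ∑ u ∈ Finset.Ico 1 m, (a u * b (m + i - u - 1) - a (m + i - u - 1) * b u)

noncomputable def Upol (a b : ℕ → ℝ) (i M : ℕ) : Polynomial ℝ :=
  pol a i * pol b M - pol a M * pol b i

lemma coeff_U_low (a b : ℕ → ℝ) {i M t : ℕ} (hiM : i ≤ M) (ht : t < i) :
    (Upol a b i M).coeff t = 0 := by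
  unfold Upol
  rw [Polynomial.coeff_sub, Polynomial.coeff_mul, Polynomial.coeff_mul,
    Finset.Nat.sum_antidiagonal_eq_sum_range_succ_mk,
    Finset.Nat.sum_antidiagonal_eq_sum_range_succ_mk, ← Finset.sum_sub_distrib]
  apply Finset.sum_eq_zero
  intro u hu
  simp only [Finset.mem_range] at hu
  simp only [pol_coeff]
  rw [if_pos (by omega), if_pos (by omega), if_pos (by omega), if_pos (by omega)]
  ring

lemma coeff_U (a b : ℕ → ℝ) (ha0 : a 0 = 1) (hb0 : b 0 = 0) {i m M : ℕ}
    (hi : 1 ≤ i) (hm : 1 ≤ m) (hM : i + m ≤ M) :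
    (Upol a b i M).coeff (m + i - 1) = vv a b i m := by
  set s := m + i - 1 with hs
  unfold Upol
  rw [Polynomial.coeff_sub, convL a i (pol b M) s (by omega), convR b i (pol a M) s]
  have h1 : ∑ u ∈ Finset.Ico 0 i, a u * (pol b M).coeff (s - u)
      = b s + ∑ u ∈ Finset.Ico 1 i, a u * b (s - u) := by
    rw [← Finset.sum_Ico_consecutive _ (by omega : (0:ℕ) ≤ 1) (by omega : 1 ≤ i)]
    congr 1
    · rw [show Finset.Ico 0 1 = {0} from rfl, Finset.sum_singleton, pol_coeff,
        if_pos (by omega), ha0, Nat.sub_zero, one_mul]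
    · apply Finset.sum_congr rfl; intro u hu
      simp only [Finset.mem_Ico] at hu
      rw [pol_coeff, if_pos (by omega)]
  have h2 : ∑ u ∈ Finset.Ico (s + 1 - i) (s + 1), (pol a M).coeff u * b (s - u)
      = ∑ u ∈ Finset.Ico m s, a u * b (s - u) := by
    rw [show s + 1 - i = m from by omega,
      ← Finset.sum_Ico_consecutive _ (by omega : m ≤ s) (by omega : s ≤ s + 1)]
    have e1 : ∑ u ∈ Finset.Ico s (s+1), (pol a M).coeff u * b (s - u) = 0 := by
      rw [Finset.sum_Ico_eq_sum_range]
      simp [hb0]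
    rw [e1, add_zero]
    apply Finset.sum_congr rfl; intro u hu
    simp only [Finset.mem_Ico] at hu
    rw [pol_coeff, if_pos (by omega)]
  rw [h1, h2]
  unfold vv
  rw [show m + i - 1 = s from rfl]
  have h3 : ∑ u ∈ Finset.Ico 1 m, (a u * b (m + i - u - 1) - a (m + i - u - 1) * b u)
      = ∑ u ∈ Finset.Ico 1 m, a u * b (s - u) - ∑ u ∈ Finset.Ico i s, a u * b (s - u) := by
    rw [Finset.sum_sub_distrib]
    congr 1
    · apply Finset.sum_congr rfl; intro u hu
      simp only [Finset.mem_Ico] at hu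
      rw [show m + i - u - 1 = s - u from by omega]
    · have e2 : ∑ u ∈ Finset.Ico 1 m, a (m + i - u - 1) * b u
          = ∑ u ∈ Finset.Ico 1 m, (fun t => a t * b (s - t)) (s - u) := by
        apply Finset.sum_congr rfl; intro u hu
        simp only [Finset.mem_Ico] at hu
        simp only
        rw [show m + i - u - 1 = s - u from by omega, show s - (s - u) = u from by omega]
      have e3 := sum_reflect (fun t => a t * b (s - t)) s 1 m (by omega)
      rw [show s + 1 - m = i from by omega, show s + 1 - 1 = s from by omega] at e3
      rw [e2, e3]
  rw [h3]
  have h4 := Finset.sum_Ico_consecutive (fun u => a u * b (s - u))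
    (by omega : (1:ℕ) ≤ i) (by omega : i ≤ s)
  have h5 := Finset.sum_Ico_consecutive (fun u => a u * b (s - u))
    (by omega : (1:ℕ) ≤ m) (by omega : m ≤ s)
  linarith

lemma trunc_diff (a b : ℕ → ℝ) {i k M : ℕ} (hi : 1 ≤ i) (hk : 1 ≤ k)
    (hiM : i ≤ M) (hkM : k ≤ M) :
    pol (fun t => (Upol a b i M).coeff t) (i + k - 1)
      - pol (fun t => (Upol a b k M).coeff t) (i + k - 1)
    = pol a i * pol b k - pol a k * pol b i := by
  apply Polynomial.ext; intro t
  rw [Polynomial.coeff_sub, pol_coeff, pol_coeff]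
  by_cases h : t < i + k - 1
  · rw [if_pos h, if_pos h]
    unfold Upol
    simp only [Polynomial.coeff_sub, Polynomial.coeff_mul,
      Finset.Nat.sum_antidiagonal_eq_sum_range_succ_mk]
    rw [← Finset.sum_sub_distrib, ← Finset.sum_sub_distrib, ← Finset.sum_sub_distrib,
      ← Finset.sum_sub_distrib]
    apply Finset.sum_congr rfl
    intro u hu
    simp only [Finset.mem_range] at hu
    simp only [pol_coeff]
    by_cases h1 : u < i <;> by_cases h2 : u < k <;> by_cases h3 : t - u < i <;>
      by_cases h4 : t - u < k <;> by_cases h5 : u < M <;> by_cases h6 : t - u < M <;>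
      simp only [h1, h2, h3, h4, h5, h6, if_true, if_false, ite_true, ite_false] <;>
      (first | ring1 | (exfalso; omega))
  · rw [if_neg h, if_neg h]
    rw [Polynomial.coeff_sub, Polynomial.coeff_mul, Polynomial.coeff_mul,
      Finset.Nat.sum_antidiagonal_eq_sum_range_succ_mk,
      Finset.Nat.sum_antidiagonal_eq_sum_range_succ_mk]
    have e1 : ∑ u ∈ Finset.range (t+1), (pol a i).coeff u * (pol b k).coeff (t - u) = 0 := by
      apply Finset.sum_eq_zero; intro u hu
      simp only [Finset.mem_range] at hu
      simp only [pol_coeff]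
      by_cases h1 : u < i
      · rw [if_pos h1, if_neg (by omega : ¬ t - u < k)]; ring
      · rw [if_neg h1]; ring
    have e2 : ∑ u ∈ Finset.range (t+1), (pol a k).coeff u * (pol b i).coeff (t - u) = 0 := by
      apply Finset.sum_eq_zero; intro u hu
      simp only [Finset.mem_range] at hu
      simp only [pol_coeff]
      by_cases h1 : u < k
      · rw [if_pos h1, if_neg (by omega : ¬ t - u < i)]; ring
      · rw [if_neg h1]; ring
    rw [e1, e2]

noncomputable def FF (a b c : ℕ → ℝ) (i k M : ℕ) : Polynomial ℝ :=
  pol (fun t => (Upol a b i M).coeff t) (i + k - 1) * pol b M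
    - pol a M * pol (fun t => (Upol a c i M).coeff t) (i + k - 1)
    + pol a k * Upol a c i M - Upol a b i M * pol b k

lemma F_symm (a b c : ℕ → ℝ) {i k M : ℕ} (hi : 1 ≤ i) (hk : 1 ≤ k)
    (hiM : i ≤ M) (hkM : k ≤ M) :
    FF a b c i k M = FF a b c k i M := by
  have h1 := trunc_diff a b hi hk hiM hkM
  have h2 := trunc_diff a c hi hk hiM hkM
  simp only [FF, Upol] at h1 h2 ⊢
  rw [show k + i - 1 = i + k - 1 from by omega]
  linear_combination (pol b M) * h1 - (pol a M) * h2

lemma sum_shift (f : ℕ → ℝ) (l r d : ℕ) :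
    ∑ u ∈ Finset.Ico (l + d) (r + d), f u = ∑ m ∈ Finset.Ico l r, f (m + d) := by
  apply Finset.sum_nbij' (fun u => u - d) (fun m => m + d)
  · intro u hu; simp only [Finset.mem_Ico] at *; omega
  · intro u hu; simp only [Finset.mem_Ico] at *; omega
  · intro u hu; simp only [Finset.mem_Ico] at *; omega
  · intro u hu; simp only [Finset.mem_Ico] at *; omega
  · intro u hu; simp only [Finset.mem_Ico] at hu
    rw [show u - d + d = u from by omega]

lemma key2 (a b c : ℕ → ℝ) (ha0 : a 0 = 1) (hb0 : b 0 = 0) (hc0 : c 0 = 0)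
    {i k j M : ℕ} (hi : 1 ≤ i) (hk : 1 ≤ k) (hj : 1 ≤ j) (hM : i + j + k ≤ M) :
    vv a c i (j + k - 1) + ∑ m ∈ Finset.Ico 1 j,
      (vv a b i m * b (j + k - m - 1) + a m * vv a c i (j + k - m - 1)
        - vv a b i (j + k - m - 1) * b m - a (j + k - m - 1) * vv a c i m)
    = (FF a b c i k M).coeff (i + j + k - 2) := by
  have hik : i ≤ M := by omega
  set s0 := i + j + k - 2 with hs0
  set mm := i + k - 1 with hmm
  set U := Upol a b i M with hU
  set Uc := Upol a c i M with hUc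
  set φ : ℕ → ℝ := fun u => U.coeff u * b (s0 - u) with hφ
  set ψ : ℕ → ℝ := fun u => a u * Uc.coeff (s0 - u) with hψ
  -- RHS pieces
  have hP1 : (pol (fun t => U.coeff t) mm * pol b M).coeff s0
      = ∑ u ∈ Finset.Ico i mm, φ u := by
    rw [convL _ mm _ s0 (by omega)]
    have e1 : ∑ u ∈ Finset.Ico 0 mm, U.coeff u * (pol b M).coeff (s0 - u)
        = ∑ u ∈ Finset.Ico 0 mm, φ u := by
      apply Finset.sum_congr rfl; intro u hu
      simp only [Finset.mem_Ico] at hu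
      rw [pol_coeff, if_pos (by omega)]
    rw [e1, ← Finset.sum_Ico_consecutive φ (by omega : (0:ℕ) ≤ i) (by omega : i ≤ mm)]
    have e2 : ∑ u ∈ Finset.Ico 0 i, φ u = 0 := by
      apply Finset.sum_eq_zero; intro u hu
      simp only [Finset.mem_Ico] at hu
      simp only [hφ, hU]
      rw [coeff_U_low a b hik (by omega)]; ring
    rw [e2, zero_add]
  have hP2 : (pol a M * pol (fun t => Uc.coeff t) mm).coeff s0
      = ∑ u ∈ Finset.Ico j (j + k - 1), ψ u := by
    rw [convR _ mm _ s0]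
    rw [show s0 + 1 - mm = j from by omega]
    have e1 : ∑ u ∈ Finset.Ico j (s0 + 1), (pol a M).coeff u * Uc.coeff (s0 - u)
        = ∑ u ∈ Finset.Ico j (s0 + 1), ψ u := by
      apply Finset.sum_congr rfl; intro u hu
      simp only [Finset.mem_Ico] at hu
      rw [pol_coeff, if_pos (by omega)]
    rw [e1, ← Finset.sum_Ico_consecutive ψ (by omega : j ≤ j + k - 1)
      (by omega : j + k - 1 ≤ s0 + 1)]
    have e2 : ∑ u ∈ Finset.Ico (j + k - 1) (s0 + 1), ψ u = 0 := by
      apply Finset.sum_eq_zero; intro u hu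
      simp only [Finset.mem_Ico] at hu
      simp only [hψ, hUc]
      rw [coeff_U_low a c hik (by omega)]; ring
    rw [e2, add_zero]
  have hP3 : (pol a k * Uc).coeff s0 = ∑ u ∈ Finset.Ico 0 k, ψ u :=
    convL a k Uc s0 (by omega)
  have hP4 : (U * pol b k).coeff s0 = ∑ u ∈ Finset.Ico (i + j - 1) s0, φ u := by
    rw [convR b k U s0, show s0 + 1 - k = i + j - 1 from by omega,
      ← Finset.sum_Ico_consecutive (fun u => U.coeff u * b (s0 - u))
        (by omega : i + j - 1 ≤ s0) (by omega : s0 ≤ s0 + 1)]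
    have e1 : ∑ u ∈ Finset.Ico s0 (s0 + 1), U.coeff u * b (s0 - u) = 0 := by
      rw [Finset.sum_Ico_eq_sum_range]
      simp [hb0]
    rw [e1, add_zero]
  -- LHS pieces
  have hL0 : vv a c i (j + k - 1) = ψ 0 := by
    simp only [hψ, ha0, Nat.sub_zero, one_mul, hUc]
    rw [show s0 = (j + k - 1) + i - 1 from by omega,
      coeff_U a c ha0 hc0 hi (by omega) (by omega)]
  have hL1 : ∑ m ∈ Finset.Ico 1 j, vv a b i m * b (j + k - m - 1)
      = ∑ u ∈ Finset.Ico i (i + j - 1), φ u := by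
    have hsh := sum_shift φ 1 j (i - 1)
    rw [show 1 + (i - 1) = i from by omega, show j + (i - 1) = i + j - 1 from by omega] at hsh
    rw [hsh]
    apply Finset.sum_congr rfl; intro m hm
    simp only [Finset.mem_Ico] at hm
    simp only [hφ, hU]
    rw [show m + (i - 1) = m + i - 1 from by omega,
      coeff_U a b ha0 hb0 hi (by omega) (by omega),
      show s0 - (m + i - 1) = j + k - m - 1 from by omega]
  have hL2 : ∑ m ∈ Finset.Ico 1 j, a m * vv a c i (j + k - m - 1)
      = ∑ m ∈ Finset.Ico 1 j, ψ m := by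
    apply Finset.sum_congr rfl; intro m hm
    simp only [Finset.mem_Ico] at hm
    simp only [hψ, hUc]
    rw [show s0 - m = (j + k - m - 1) + i - 1 from by omega,
      coeff_U a c ha0 hc0 hi (by omega) (by omega)]
  have hL3 : ∑ m ∈ Finset.Ico 1 j, vv a b i (j + k - m - 1) * b m
      = ∑ u ∈ Finset.Ico mm s0, φ u := by
    have e1 : ∑ m ∈ Finset.Ico 1 j, vv a b i (j + k - m - 1) * b m
        = ∑ m ∈ Finset.Ico 1 j, φ (s0 - m) := by
      apply Finset.sum_congr rfl; intro m hm
      simp only [Finset.mem_Ico] at hm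
      simp only [hφ, hU]
      rw [show s0 - m = (j + k - m - 1) + i - 1 from by omega,
        coeff_U a b ha0 hb0 hi (by omega) (by omega),
        show s0 - ((j + k - m - 1) + i - 1) = m from by omega]
    rw [e1, sum_reflect φ s0 1 j (by omega), show s0 + 1 - j = mm from by omega,
      show s0 + 1 - 1 = s0 from by omega]
  have hL4 : ∑ m ∈ Finset.Ico 1 j, a (j + k - m - 1) * vv a c i m
      = ∑ u ∈ Finset.Ico k (j + k - 1), ψ u := by
    have e1 : ∑ m ∈ Finset.Ico 1 j, a (j + k - m - 1) * vv a c i m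
        = ∑ m ∈ Finset.Ico 1 j, ψ ((j + k - 1) - m) := by
      apply Finset.sum_congr rfl; intro m hm
      simp only [Finset.mem_Ico] at hm
      simp only [hψ, hUc]
      rw [show (j + k - 1) - m = j + k - m - 1 from by omega,
        show s0 - (j + k - m - 1) = m + i - 1 from by omega,
        coeff_U a c ha0 hc0 hi (by omega) (by omega)]
    rw [e1, sum_reflect ψ (j + k - 1) 1 j (by omega),
      show j + k - 1 + 1 - j = k from by omega,
      show j + k - 1 + 1 - 1 = j + k - 1 from by omega]
  -- assemble
  have hsplit : ∀ t ∈ Finset.Ico 1 j,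
      vv a b i t * b (j + k - t - 1) + a t * vv a c i (j + k - t - 1)
        - vv a b i (j + k - t - 1) * b t - a (j + k - t - 1) * vv a c i t
      = (vv a b i t * b (j + k - t - 1) + a t * vv a c i (j + k - t - 1))
        - (vv a b i (j + k - t - 1) * b t + a (j + k - t - 1) * vv a c i t) := by
    intro t _; ring
  rw [Finset.sum_congr rfl hsplit, Finset.sum_sub_distrib, Finset.sum_add_distrib,
    Finset.sum_add_distrib, hL1, hL2, hL3, hL4, hL0]
  simp only [FF, Polynomial.coeff_add, Polynomial.coeff_sub, ← hU, ← hUc, ← hmm]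
  rw [hP1, hP2, hP3, hP4]
  have hc1 := Finset.sum_Ico_consecutive φ (by omega : i ≤ i + j - 1) (by omega : i + j - 1 ≤ s0)
  have hc2 := Finset.sum_Ico_consecutive φ (by omega : i ≤ mm) (by omega : mm ≤ s0)
  have hc3 := Finset.sum_Ico_consecutive ψ (by omega : (0:ℕ) ≤ j) (by omega : j ≤ j + k - 1)
  have hc4 := Finset.sum_Ico_consecutive ψ (by omega : (0:ℕ) ≤ k) (by omega : k ≤ j + k - 1)
  have hc5 := Finset.sum_Ico_consecutive ψ (by omega : (0:ℕ) ≤ 1) (by omega : 1 ≤ j)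
  have hc6 : ∑ u ∈ Finset.Ico 0 1, ψ u = ψ 0 := by
    rw [show Finset.Ico 0 1 = {0} from rfl, Finset.sum_singleton]
  linarith

section Analysis

variable {n : ℕ} {q : ℕ → ℝ → ℝ}

lemma Zcomp_hasDerivAt (hsmooth : ∀ j : ℕ, ContDiff ℝ (⊤ : ℕ∞) (q j)) (i m : ℕ) (x : ℝ) :
    HasDerivAt (Zcomp q i m)
      (deriv (deriv (q (m + i - 1))) x + ∑ u ∈ Finset.Ico 1 m,
        (q u x * deriv (deriv (q (m + i - u - 1))) x
          - q (m + i - u - 1) x * deriv (deriv (q u)) x)) x := by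
  have hdf : ∀ s, Differentiable ℝ (q s) := fun s =>
    (hsmooth s).differentiable (by simp)
  have hd : ∀ s, Differentiable ℝ (deriv (q s)) := fun s =>
    ((contDiff_infty_iff_deriv.mp ((hsmooth s).of_le (by exact_mod_cast le_top))).2.differentiable
      (by simp))
  have H : HasDerivAt (fun y => deriv (q (m + i - 1)) y + ∑ u ∈ Finset.Ico 1 m,
      (q u y * deriv (q (m + i - u - 1)) y - q (m + i - u - 1) y * deriv (q u) y))
      (deriv (deriv (q (m + i - 1))) x + ∑ u ∈ Finset.Ico 1 m,
        ((deriv (q u) x * deriv (q (m + i - u - 1)) x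
            + q u x * deriv (deriv (q (m + i - u - 1))) x)
          - (deriv (q (m + i - u - 1)) x * deriv (q u) x
            + q (m + i - u - 1) x * deriv (deriv (q u)) x))) x := by
    apply HasDerivAt.add
    · exact ((hd _) x).hasDerivAt
    · apply HasDerivAt.fun_sum
      intro u _
      exact (((hdf u) x).hasDerivAt.mul ((hd _) x).hasDerivAt).sub
        (((hdf _) x).hasDerivAt.mul ((hd u) x).hasDerivAt)
  have hval : ∑ u ∈ Finset.Ico 1 m,
        ((deriv (q u) x * deriv (q (m + i - u - 1)) x
            + q u x * deriv (deriv (q (m + i - u - 1))) x)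
          - (deriv (q (m + i - u - 1)) x * deriv (q u) x
            + q (m + i - u - 1) x * deriv (deriv (q u)) x))
      = ∑ u ∈ Finset.Ico 1 m,
        (q u x * deriv (deriv (q (m + i - u - 1))) x
          - q (m + i - u - 1) x * deriv (deriv (q u)) x) := by
    apply Finset.sum_congr rfl; intro u _; ring
  rw [← hval]
  exact H

lemma Zcomp_vanish (hsmooth : ∀ j : ℕ, ContDiff ℝ (⊤ : ℕ∞) (q j))
    (hzero : ∀ j : ℕ, n < j → q j = fun _ => 0)
    {i m : ℕ} (hi1 : 1 ≤ i) (hin : i ≤ n) (hm : n < m) :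
    Zcomp q i m = fun _ => 0 := by
  funext x
  show deriv (q (m + i - 1)) x + ∑ u ∈ Finset.Ico 1 m,
      (q u x * deriv (q (m + i - u - 1)) x - q (m + i - u - 1) x * deriv (q u) x) = 0
  rw [hzero (m + i - 1) (by omega)]
  simp only [deriv_const']
  rw [zero_add, ← Finset.sum_Ico_consecutive _ (by omega : 1 ≤ i) (by omega : i ≤ m)]
  have e1 : ∑ u ∈ Finset.Ico 1 i,
      (q u x * deriv (q (m + i - u - 1)) x - q (m + i - u - 1) x * deriv (q u) x) = 0 := by
    apply Finset.sum_eq_zero; intro u hu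
    simp only [Finset.mem_Ico] at hu
    rw [hzero (m + i - u - 1) (by omega)]
    simp
  have e2 : ∑ u ∈ Finset.Ico i m,
      (q u x * deriv (q (m + i - u - 1)) x - q (m + i - u - 1) x * deriv (q u) x) = 0 := by
    apply Finset.sum_involution (fun u _ => m + i - u - 1)
    · intro u hu
      simp only [Finset.mem_Ico] at hu
      rw [show m + i - (m + i - u - 1) - 1 = u from by omega]
      ring
    · intro u hu hne hgu
      apply hne
      rw [hgu]
      ring
    · intro u hu
      simp only [Finset.mem_Ico] at *
      omega
    · intro u hu
      simp only [Finset.mem_Ico] at hu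
      omega
  rw [e1, e2, add_zero]

end Analysis

section Analysis2

variable {n : ℕ} {q : ℕ → ℝ → ℝ}

lemma perturb_apply (i m : ℕ) (ε x : ℝ) :
    perturb n q i ε m x
      = (if m ≤ n then q m x else 0) + ε * (if m ≤ n then Zcomp q i m x else 0) := by
  by_cases h : m ≤ n <;> simp [perturb, h]

lemma perturb_deriv (hsmooth : ∀ j : ℕ, ContDiff ℝ (⊤ : ℕ∞) (q j)) (i m : ℕ) (ε x : ℝ) :
    deriv (perturb n q i ε m) x
      = (if m ≤ n then deriv (q m) x else 0)
        + ε * (if m ≤ n then deriv (Zcomp q i m) x else 0) := by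
  have hdf : ∀ s, Differentiable ℝ (q s) := fun s =>
    (hsmooth s).differentiable (by simp)
  by_cases h : m ≤ n
  · have h1 : perturb n q i ε m = fun y => q m y + ε * Zcomp q i m y := by
      funext y; simp [perturb, h]
    rw [h1, if_pos h, if_pos h]
    have hq : HasDerivAt (q m) (deriv (q m) x) x := ((hdf m) x).hasDerivAt
    have hZ : HasDerivAt (Zcomp q i m) (deriv (Zcomp q i m) x) x :=
      (Zcomp_hasDerivAt hsmooth i m x).differentiableAt.hasDerivAt
    exact (hq.add (hZ.const_mul ε)).deriv
  · have h1 : perturb n q i ε m = fun _ => 0 := by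
      funext y; simp [perturb, h]
    rw [h1, if_neg h, if_neg h]
    simp

lemma main_deriv (hsmooth : ∀ j : ℕ, ContDiff ℝ (⊤ : ℕ∞) (q j)) (i k j : ℕ) (x : ℝ) :
    deriv (fun ε => Zcomp (perturb n q i ε) k j x) 0
      = (if j + k - 1 ≤ n then deriv (Zcomp q i (j + k - 1)) x else 0)
        + ∑ m ∈ Finset.Ico 1 j,
          ((if m ≤ n then Zcomp q i m x else 0)
              * (if j + k - m - 1 ≤ n then deriv (q (j + k - m - 1)) x else 0)
            + (if m ≤ n then q m x else 0)
              * (if j + k - m - 1 ≤ n then deriv (Zcomp q i (j + k - m - 1)) x else 0)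
            - (if j + k - m - 1 ≤ n then Zcomp q i (j + k - m - 1) x else 0)
              * (if m ≤ n then deriv (q m) x else 0)
            - (if j + k - m - 1 ≤ n then q (j + k - m - 1) x else 0)
              * (if m ≤ n then deriv (Zcomp q i m) x else 0)) := by
  set A : ℕ → ℝ := fun m => if m ≤ n then q m x else 0 with hA
  set V : ℕ → ℝ := fun m => if m ≤ n then Zcomp q i m x else 0 with hV
  set B : ℕ → ℝ := fun m => if m ≤ n then deriv (q m) x else 0 with hB
  set W : ℕ → ℝ := fun m => if m ≤ n then deriv (Zcomp q i m) x else 0 with hW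
  have hrw : (fun ε => Zcomp (perturb n q i ε) k j x)
      = fun ε => (B (j + k - 1) + ε * W (j + k - 1)) + ∑ m ∈ Finset.Ico 1 j,
          ((A m + ε * V m) * (B (j + k - m - 1) + ε * W (j + k - m - 1))
            - (A (j + k - m - 1) + ε * V (j + k - m - 1)) * (B m + ε * W m)) := by
    funext ε
    show deriv (perturb n q i ε (j + k - 1)) x + ∑ m ∈ Finset.Ico 1 j,
        (perturb n q i ε m x * deriv (perturb n q i ε (j + k - m - 1)) x
          - perturb n q i ε (j + k - m - 1) x * deriv (perturb n q i ε m) x) = _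
    rw [perturb_deriv hsmooth]
    congr 1
    apply Finset.sum_congr rfl; intro m _
    rw [perturb_apply, perturb_apply, perturb_deriv hsmooth, perturb_deriv hsmooth]
  rw [hrw]
  have hlin : ∀ (p r : ℝ), HasDerivAt (fun ε : ℝ => p + ε * r) r 0 := by
    intro p r
    simpa using ((hasDerivAt_id (0:ℝ)).mul_const r).const_add p
  have H := (hlin (B (j + k - 1)) (W (j + k - 1))).fun_add
    (HasDerivAt.fun_sum (u := Finset.Ico 1 j) (A' := fun m =>
      (V m * ((B (j + k - m - 1)) + 0 * W (j + k - m - 1))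
        + (A m + 0 * V m) * W (j + k - m - 1))
      - (V (j + k - m - 1) * (B m + 0 * W m)
        + (A (j + k - m - 1) + 0 * V (j + k - m - 1)) * W m))
      (fun m _ => ((hlin (A m) (V m)).fun_mul
          (hlin (B (j + k - m - 1)) (W (j + k - m - 1)))).fun_sub
        ((hlin (A (j + k - m - 1)) (V (j + k - m - 1))).fun_mul (hlin (B m) (W m)))))
  rw [H.deriv]
  congr 1
  apply Finset.sum_congr rfl; intro m _
  ring

end Analysis2


/-- The Killing vector fields commute: the Gateaux derivative of `Z_k^n` at `q` in the
direction `Z_i^n[q]` equals the Gateaux derivative of `Z_i^n` at `q` in the direction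
`Z_k^n[q]`, componentwise and pointwise. -/
theorem killing_fields_commute (n : ℕ) (hn : 1 ≤ n) (q : ℕ → ℝ → ℝ)
    (hsmooth : ∀ j : ℕ, ContDiff ℝ (⊤ : ℕ∞) (q j))
    (hzero : ∀ j : ℕ, n < j → q j = fun _ => 0) :
    ∀ i k : ℕ, 1 ≤ i → i ≤ n → 1 ≤ k → k ≤ n →
      ∀ j : ℕ, 1 ≤ j → j ≤ n → ∀ x : ℝ,
        deriv (fun ε => Zcomp (perturb n q i ε) k j x) 0
          = deriv (fun ε => Zcomp (perturb n q k ε) i j x) 0 := by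
  intro i k hi1 hin hk1 hkn j hj1 hjn x
  set a : ℕ → ℝ := fun u => if u = 0 then 1 else q u x with ha
  set b : ℕ → ℝ := fun u => if u = 0 then 0 else deriv (q u) x with hb
  set c : ℕ → ℝ := fun u => if u = 0 then 0 else deriv (deriv (q u)) x with hc
  have ha0 : a 0 = 1 := by simp [ha]
  have hb0 : b 0 = 0 := by simp [hb]
  have hc0 : c 0 = 0 := by simp [hc]
  have haq : ∀ u : ℕ, 1 ≤ u → a u = q u x := by
    intro u hu; simp only [ha]; rw [if_neg (by omega : ¬ u = 0)]
  have hbq : ∀ u : ℕ, 1 ≤ u → b u = deriv (q u) x := by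
    intro u hu; simp only [hb]; rw [if_neg (by omega : ¬ u = 0)]
  have hcq : ∀ u : ℕ, 1 ≤ u → c u = deriv (deriv (q u)) x := by
    intro u hu; simp only [hc]; rw [if_neg (by omega : ¬ u = 0)]
  -- pointwise identification with the abstract fields
  have hval : ∀ i' m : ℕ, 1 ≤ i' → 1 ≤ m → Zcomp q i' m x = vv a b i' m := by
    intro i' m hi' hm
    show deriv (q (m + i' - 1)) x + ∑ u ∈ Finset.Ico 1 m,
        (q u x * deriv (q (m + i' - u - 1)) x - q (m + i' - u - 1) x * deriv (q u) x)
      = vv a b i' m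
    unfold vv
    congr 1
    · rw [hbq (m + i' - 1) (by omega)]
    · apply Finset.sum_congr rfl; intro u hu
      simp only [Finset.mem_Ico] at hu
      rw [haq u (by omega), hbq (m + i' - u - 1) (by omega),
        haq (m + i' - u - 1) (by omega), hbq u (by omega)]
  have hwal : ∀ i' m : ℕ, 1 ≤ i' → 1 ≤ m → deriv (Zcomp q i' m) x = vv a c i' m := by
    intro i' m hi' hm
    rw [(Zcomp_hasDerivAt hsmooth i' m x).deriv]
    unfold vv
    congr 1
    · rw [hcq (m + i' - 1) (by omega)]
    · apply Finset.sum_congr rfl; intro u hu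
      simp only [Finset.mem_Ico] at hu
      rw [haq u (by omega), hcq (m + i' - u - 1) (by omega),
        haq (m + i' - u - 1) (by omega), hcq u (by omega)]
  -- guarded versions
  have hA : ∀ m : ℕ, 1 ≤ m → (if m ≤ n then q m x else 0) = a m := by
    intro m hm
    by_cases h : m ≤ n
    · rw [if_pos h, haq m hm]
    · rw [if_neg h, haq m hm, hzero m (by omega)]
  have hB : ∀ m : ℕ, 1 ≤ m → (if m ≤ n then deriv (q m) x else 0) = b m := by
    intro m hm
    by_cases h : m ≤ n
    · rw [if_pos h, hbq m hm]
    · rw [if_neg h, hbq m hm, hzero m (by omega)]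
      simp
  have hVg : ∀ i' m : ℕ, 1 ≤ i' → i' ≤ n → 1 ≤ m →
      (if m ≤ n then Zcomp q i' m x else 0) = vv a b i' m := by
    intro i' m hi' hin' hm
    by_cases h : m ≤ n
    · rw [if_pos h, hval i' m hi' hm]
    · rw [if_neg h, ← hval i' m hi' hm,
        Zcomp_vanish hsmooth hzero hi' hin' (by omega : n < m)]
  have hWg : ∀ i' m : ℕ, 1 ≤ i' → i' ≤ n → 1 ≤ m →
      (if m ≤ n then deriv (Zcomp q i' m) x else 0) = vv a c i' m := by
    intro i' m hi' hin' hm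
    by_cases h : m ≤ n
    · rw [if_pos h, hwal i' m hi' hm]
    · rw [if_neg h, ← hwal i' m hi' hm,
        Zcomp_vanish hsmooth hzero hi' hin' (by omega : n < m)]
      simp
  set M : ℕ := i + j + k with hM
  have hLHS : deriv (fun ε => Zcomp (perturb n q i ε) k j x) 0
      = (FF a b c i k M).coeff (i + j + k - 2) := by
    rw [main_deriv hsmooth i k j x]
    rw [← key2 a b c ha0 hb0 hc0 hi1 hk1 hj1 (by omega : i + j + k ≤ M)]
    congr 1
    · exact hWg i (j + k - 1) hi1 hin (by omega)
    · apply Finset.sum_congr rfl; intro m hm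
      simp only [Finset.mem_Ico] at hm
      rw [hVg i m hi1 hin (by omega), hB (j + k - m - 1) (by omega),
        hA m (by omega), hWg i (j + k - m - 1) hi1 hin (by omega),
        hVg i (j + k - m - 1) hi1 hin (by omega), hB m (by omega),
        hA (j + k - m - 1) (by omega), hWg i m hi1 hin (by omega)]
  have hRHS : deriv (fun ε => Zcomp (perturb n q k ε) i j x) 0
      = (FF a b c k i M).coeff (i + j + k - 2) := by
    rw [main_deriv hsmooth k i j x]
    have hk2 := key2 a b c ha0 hb0 hc0 hk1 hi1 hj1 (by omega : k + j + i ≤ M)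
    rw [show k + j + i - 2 = i + j + k - 2 from by omega] at hk2
    rw [← hk2]
    congr 1
    · exact hWg k (j + i - 1) hk1 hkn (by omega)
    · apply Finset.sum_congr rfl; intro m hm
      simp only [Finset.mem_Ico] at hm
      rw [hVg k m hk1 hkn (by omega), hB (j + i - m - 1) (by omega),
        hA m (by omega), hWg k (j + i - m - 1) hk1 hkn (by omega),
        hVg k (j + i - m - 1) hk1 hkn (by omega), hB m (by omega),
        hA (j + i - m - 1) (by omega), hWg k m hk1 hkn (by omega)]
  rw [hLHS, hRHS, F_symm a b c hi1 hk1 (by omega : i ≤ M) (by omega : k ≤ M)]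
end

section
/- Let n ≥ 2, A ∈ ℝ with A ≠ 0, B ∈ ℝ. For integers m ≤ 0 and k ≥ 0 define the Lagrangian L^{n,m,k} : ℝ^n × ℝ^n → ℝ by L^{n,m,k}(q,v) = (1/(4A)) Σ_{i,j=1}^{n} V_1^{(2n−m−i−j)}(q) v_i v_j − B V_1^{(k)}(q), where V_i^{(s)} are the separable potentials (note 2n−m−i−j ≥ 0 for all i,j ≤ n). For a smooth curve q : ℝ → ℝ^n define the Euler–Lagrange expressions E_i(L)(x) = (∂L/∂q_i)(q(x),q'(x)) − d/dx[ (∂L/∂v_i)(q(x),q'(x)) ]. Then for every α ∈ {1,…,n−1}, every integer m with m ≤ −α, every integer k ≥ α, every i ∈ {α+1,…,n} and every smooth curve q : ℝ → ℝ^n one has, pointwise, E_i(L^{n,m,k})(q) = E_{i−α}(L^{n,m+α,k−α})(q). -/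
open scoped BigOperators

/-- The first separable potential `V_1^{(k)}`. -/
noncomputable def V1 (n k : ℕ) (q : Fin n → ℝ) : ℝ :=
  if h : 0 < n then Vpot n k q ⟨0, h⟩ else 0

/-- The Lagrangian `L^{n,m,k}(q,v) = (1/(4A)) ∑_{i,j=1}^n V_1^{(2n−m−i−j)}(q) v_i v_j
− B V_1^{(k)}(q)` (here `m : ℤ`, `m ≤ 0`, so the superscripts are natural numbers). -/
noncomputable def Lag (n : ℕ) (A B : ℝ) (m : ℤ) (k : ℕ) (q v : Fin n → ℝ) : ℝ :=
  (1 / (4 * A)) *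
      ∑ i : Fin n, ∑ j : Fin n,
        V1 n ((2 * (n : ℤ) - m - ((i : ℕ) + 1) - ((j : ℕ) + 1)).toNat) q * v i * v j
    - B * V1 n k q

/-- The `i`-th Euler–Lagrange expression of the Lagrangian `L(q,v)` along a curve
`q : ℝ → ℝ^n`:  `E_i(L)(x) = ∂L/∂q_i(q(x),q'(x)) − d/dx[∂L/∂v_i(q(x),q'(x))]`. -/
noncomputable def EL (n : ℕ) (L : (Fin n → ℝ) → (Fin n → ℝ) → ℝ)
    (i : Fin n) (q : ℝ → Fin n → ℝ) (x : ℝ) : ℝ :=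
  pderiv' n (fun a => L a (deriv q x)) i (q x)
    - deriv (fun y => pderiv' n (fun b => L (q y) b) i (deriv q y)) x

/-- The partial derivative `∂V_j^{(s)}/∂q_r`, defined by the recursion induced from
the recursion for the separable potentials. -/
noncomputable def DV (n : ℕ) : ℕ → (Fin n → ℝ) → Fin n → Fin n → ℝ
  | 0, _, _, _ => 0
  | s + 1, q, j, r =>
      (if h : (j : ℕ) + 1 < n then DV n s q ⟨(j : ℕ) + 1, h⟩ r else 0)
        - (if j = r then Vpot n s q ⟨0, j.pos⟩ else 0)
        - q j * DV n s q ⟨0, j.pos⟩ r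

theorem hasDerivAt_update' (n : ℕ) (x : Fin n → ℝ) (r j : Fin n) (t : ℝ) :
    HasDerivAt (fun t : ℝ => Function.update x r t j) (if j = r then 1 else 0) t := by
  by_cases h : j = r
  · subst h; simp only [Function.update_self, if_pos rfl]; exact hasDerivAt_id t
  · simp only [Function.update_of_ne h, if_neg h]; exact hasDerivAt_const t _

theorem hasDerivAt_Vpot (n : ℕ) : ∀ (s : ℕ) (x : Fin n → ℝ) (r j : Fin n) (t : ℝ),
    HasDerivAt (fun t => Vpot n s (Function.update x r t) j)
      (DV n s (Function.update x r t) j r) t := by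
  intro s
  induction s with
  | zero => intro x r j t; simp only [Vpot, DV]; exact hasDerivAt_const t _
  | succ s ih =>
    intro x r j t
    have h0 := ih x r ⟨0, j.pos⟩ t
    have hu := hasDerivAt_update' n x r j t
    have hmul := hu.fun_mul h0
    by_cases h : (j : ℕ) + 1 < n
    · have h1 := ih x r ⟨(j : ℕ) + 1, h⟩ t
      have := h1.fun_sub hmul
      simp only [Vpot, DV, dif_pos h]
      refine this.congr_deriv ?_
      by_cases hjr : j = r <;> simp [hjr] <;> ring
    · have := (hasDerivAt_const t (0:ℝ)).fun_sub hmul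
      simp only [Vpot, DV, dif_neg h]
      refine this.congr_deriv ?_
      by_cases hjr : j = r <;> simp [hjr] <;> ring

theorem DV_shift (n : ℕ) : ∀ (s : ℕ) (q : Fin n → ℝ) (j r : Fin n) (hr : 1 ≤ (r : ℕ))
    (hrn : (r : ℕ) ≤ n - 1),
    DV n (s + 1) q j r
      = DV n s q j ⟨(r : ℕ) - 1, by omega⟩ - (if j = r then Vpot n s q ⟨0, j.pos⟩ else 0) := by
  intro s
  induction s with
  | zero =>
    intro q j r hr hrn
    simp [DV]
  | succ s ih =>
    intro q j r hr hrn
    conv_lhs => rw [DV]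
    rw [ih q ⟨0, j.pos⟩ r hr hrn]
    conv_rhs => rw [DV]
    by_cases h : (j : ℕ) + 1 < n
    · rw [dif_pos h, dif_pos h, ih q ⟨(j : ℕ) + 1, h⟩ r hr hrn]
      have hδ : ((⟨(j : ℕ) + 1, h⟩ : Fin n) = r) ↔ (j = (⟨(r : ℕ) - 1, by omega⟩ : Fin n)) := by
        constructor <;> intro hh <;> apply Fin.ext <;>
          (have := congrArg Fin.val hh; simp at this ⊢; omega)
      have h0' : ¬ ((⟨0, Fin.pos j⟩ : Fin n) = r) := by
        intro hh; have := congrArg Fin.val hh; simp at this; omega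
      rw [if_congr hδ rfl rfl, if_neg h0']
      ring
    · rw [dif_neg h, dif_neg h]
      have hj : (j : ℕ) = n - 1 := by have := j.isLt; omega
      have hd : ¬ (j = (⟨(r : ℕ) - 1, by omega⟩ : Fin n)) := by
        intro hh; have := congrArg Fin.val hh; simp [hj] at this; omega
      have h0' : ¬ ((⟨0, Fin.pos j⟩ : Fin n) = r) := by
        intro hh; have := congrArg Fin.val hh; simp at this; omega
      rw [if_neg hd, if_neg h0']
      ring

theorem DV_shift_iter (n : ℕ) (hn : 0 < n) : ∀ (α : ℕ) (s : ℕ) (q : Fin n → ℝ) (r : Fin n),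
    α ≤ s → α ≤ (r : ℕ) → (r : ℕ) ≤ n - 1 →
    DV n s q ⟨0, hn⟩ r = DV n (s - α) q ⟨0, hn⟩ ⟨(r : ℕ) - α, by have := r.isLt; omega⟩ := by
  intro α
  induction α with
  | zero =>
    intro s q r _ _ _
    simp
  | succ α ih =>
    intro s q r hs hr hrn
    obtain ⟨s', rfl⟩ : ∃ s', s = s' + 1 := ⟨s - 1, by omega⟩
    have h0 : ¬ ((⟨0, hn⟩ : Fin n) = r) := by
      intro hh; have := congrArg Fin.val hh; simp at this; omega
    have h1 : DV n (s' + 1) q ⟨0, hn⟩ r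
        = DV n s' q ⟨0, hn⟩ ⟨(r : ℕ) - 1, by have := r.isLt; omega⟩ := by
      rw [DV_shift n s' q ⟨0, hn⟩ r (by omega) hrn, if_neg h0, sub_zero]
    rw [h1, ih s' q ⟨(r : ℕ) - 1, by have := r.isLt; omega⟩ (by omega) (by simp; omega)
        (by simp; omega)]
    congr 1 <;> simp <;> omega

theorem pderiv'_Lag_q (n : ℕ) (hn : 0 < n) (A B : ℝ) (m : ℤ) (k : ℕ) (v : Fin n → ℝ)
    (r : Fin n) (x : Fin n → ℝ) :
    pderiv' n (fun a => Lag n A B m k a v) r x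
      = (1 / (4 * A)) * ∑ j : Fin n, ∑ l : Fin n,
          DV n ((2 * (n : ℤ) - m - ((j : ℕ) + 1) - ((l : ℕ) + 1)).toNat) x ⟨0, hn⟩ r * v j * v l
        - B * DV n k x ⟨0, hn⟩ r := by
  have key : ∀ (s : ℕ) (j : Fin n), HasDerivAt (fun t => Vpot n s (Function.update x r t) j)
      (DV n s x j r) (x r) := by
    intro s j
    have := hasDerivAt_Vpot n s x r j (x r)
    rwa [Function.update_eq_self] at this
  have hsum : HasDerivAt (fun t => ∑ j : Fin n, ∑ l : Fin n,
      Vpot n ((2 * (n : ℤ) - m - ((j : ℕ) + 1) - ((l : ℕ) + 1)).toNat) (Function.update x r t) ⟨0, hn⟩ * v j * v l)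
      (∑ j : Fin n, ∑ l : Fin n,
      DV n ((2 * (n : ℤ) - m - ((j : ℕ) + 1) - ((l : ℕ) + 1)).toNat) x ⟨0, hn⟩ r * v j * v l) (x r) :=
    HasDerivAt.fun_sum fun j _ => HasDerivAt.fun_sum fun l _ =>
      ((key _ _).mul_const (v j)).mul_const (v l)
  have H := (hsum.const_mul (1 / (4 * A))).sub ((key k ⟨0, hn⟩).const_mul B)
  unfold pderiv'
  simp only [Lag, V1, dif_pos hn]
  exact H.deriv

theorem pderiv'_Lag_v (n : ℕ) (hn : 0 < n) (A B : ℝ) (m : ℤ) (k : ℕ) (a : Fin n → ℝ)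
    (r : Fin n) (w : Fin n → ℝ) :
    pderiv' n (fun b => Lag n A B m k a b) r w
      = (1 / (4 * A)) *
        ((∑ l : Fin n, V1 n ((2 * (n : ℤ) - m - ((r : ℕ) + 1) - ((l : ℕ) + 1)).toNat) a * w l)
          + ∑ j : Fin n, V1 n ((2 * (n : ℤ) - m - ((j : ℕ) + 1) - ((r : ℕ) + 1)).toNat) a * w j) := by
  set c : Fin n → Fin n → ℝ := fun j l => V1 n ((2 * (n : ℤ) - m - ((j : ℕ) + 1) - ((l : ℕ) + 1)).toNat) a with hc
  have hu : ∀ j : Fin n, HasDerivAt (fun t : ℝ => Function.update w r t j)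
      (if j = r then 1 else 0) (w r) := fun j => hasDerivAt_update' n w r j (w r)
  have hterm : ∀ j l : Fin n, HasDerivAt
      (fun t => c j l * Function.update w r t j * Function.update w r t l)
      ((0 * w j + c j l * (if j = r then 1 else 0)) * w l
        + (c j l * w j) * (if l = r then 1 else 0)) (w r) := by
    intro j l
    have := ((hasDerivAt_const (w r) (c j l)).fun_mul (hu j)).fun_mul (hu l)
    simpa [Function.update_eq_self] using this
  have hsum : HasDerivAt (fun t => ∑ j : Fin n, ∑ l : Fin n,
      c j l * Function.update w r t j * Function.update w r t l)
      (∑ j : Fin n, ∑ l : Fin n, ((0 * w j + c j l * (if j = r then 1 else 0)) * w l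
        + (c j l * w j) * (if l = r then 1 else 0))) (w r) :=
    HasDerivAt.fun_sum fun j _ => HasDerivAt.fun_sum fun l _ => hterm j l
  have H := (hsum.const_mul (1 / (4 * A))).sub_const (B * V1 n k a)
  unfold pderiv'
  have := H.deriv
  simp only [Lag]
  rw [this]
  congr 1
  simp only [zero_mul, zero_add, mul_ite, ite_mul, mul_one, mul_zero]
  simp [Finset.sum_add_distrib, Finset.sum_ite_irrel, Finset.sum_ite_eq', hc]

/-- Symmetry of the Euler–Lagrange expressions. -/
theorem lagrangian_symmetry (n : ℕ) (hn : 2 ≤ n) (A B : ℝ) (hA : A ≠ 0)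
    (α : ℕ) (hα1 : 1 ≤ α) (hα2 : α ≤ n - 1)
    (m : ℤ) (hm : m ≤ -(α : ℤ)) (k : ℕ) (hk : α ≤ k)
    (i : ℕ) (hi1 : α + 1 ≤ i) (hi2 : i ≤ n)
    (q : ℝ → Fin n → ℝ) (hq : ContDiff ℝ (⊤ : ℕ∞) q) (x : ℝ) :
    EL n (Lag n A B m k) ⟨i - 1, by omega⟩ q x
      = EL n (Lag n A B (m + (α : ℤ)) (k - α)) ⟨i - α - 1, by omega⟩ q x := by
  have hn0 : 0 < n := by omega
  unfold EL
  congr 1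
  · -- ∂L/∂q part
    rw [pderiv'_Lag_q n hn0, pderiv'_Lag_q n hn0]
    congr 1
    · congr 1
      refine Finset.sum_congr rfl fun j _ => Finset.sum_congr rfl fun l _ => ?_
      have hj := j.isLt
      have hl := l.isLt
      rw [DV_shift_iter n hn0 α _ (q x) ⟨i - 1, by omega⟩ (by omega) (by simp; omega)
          (by simp; omega)]
      have e1 : ((2 * (n : ℤ) - m - ((j : ℕ) + 1) - ((l : ℕ) + 1)).toNat - α)
          = (2 * (n : ℤ) - (m + (α : ℤ)) - ((j : ℕ) + 1) - ((l : ℕ) + 1)).toNat := by omega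
      have e2 : (⟨((⟨i - 1, by omega⟩ : Fin n) : ℕ) - α, by show i - 1 - α < n; omega⟩ : Fin n)
          = (⟨i - α - 1, by omega⟩ : Fin n) := by apply Fin.ext; simp; omega
      rw [e1, e2]
    · congr 1
      rw [DV_shift_iter n hn0 α k (q x) ⟨i - 1, by omega⟩ hk (by simp; omega) (by simp; omega)]
      congr 1
      apply Fin.ext; simp; omega
  · -- d/dx ∂L/∂v part
    have hfun : (fun y => pderiv' n (fun b => Lag n A B m k (q y) b) ⟨i - 1, by omega⟩ (deriv q y))
        = (fun y => pderiv' n (fun b => Lag n A B (m + (α : ℤ)) (k - α) (q y) b)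
            ⟨i - α - 1, by omega⟩ (deriv q y)) := by
      funext y
      rw [pderiv'_Lag_v n hn0, pderiv'_Lag_v n hn0]
      congr 1
      congr 1
      · refine Finset.sum_congr rfl fun l _ => ?_
        have hl := l.isLt
        congr 2
        simp
        omega
      · refine Finset.sum_congr rfl fun j _ => ?_
        have hj := j.isLt
        congr 2
        simp
        omega
    rw [hfun]
end

section
/- Let D = {(x,t_2,t_3) ∈ ℝ³ : x⁶ + 45 x t_3 − 15 t_2 x³ − 45 t_2² ≠ 0} and define on D the rational function q(x,t_2,t_3) = −3(675 t_3² − 270 t_3 x⁵ + 2 x¹⁰ + 675 x⁴ t_2² − 1350 x t_2³) / (x⁶ + 45 x t_3 − 15 t_2 x³ − 45 t_2²)². Then q is a simultaneous solution on D of the second and third KdV flows: ∂q/∂t_2 = (1/4)∂_x³q + 3 q ∂_x q and ∂q/∂t_3 = (1/16)∂_x⁵q + (5/2)(∂_x q)(∂_x² q) + (5/4) q ∂_x³ q + (15/2) q² ∂_x q. -/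
/-!
The solution is `q = ∂ₓ² log τ` for the polynomial `τ = x⁶ + 45xt₃ − 15t₂x³ − 45t₂²`, so on
`{τ ≠ 0}` every partial derivative of `q` is a polynomial divided by a power of `τ`, the numerator
being produced from the previous one by the quotient rule. Clearing denominators, each of the two
flows becomes an identity between polynomials in `x, t₂, t₃`, which is checked by normalization.
-/

/-- The rational zero-energy solution of the KdV hierarchy:
`q(x,t₂,t₃) = −3(675t₃² − 270t₃x⁵ + 2x¹⁰ + 675x⁴t₂² − 1350xt₂³)
/ (x⁶ + 45xt₃ − 15t₂x³ − 45t₂²)²`. -/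
noncomputable def qsol (x t2 t3 : ℝ) : ℝ :=
  -3 * (675 * t3 ^ 2 - 270 * t3 * x ^ 5 + 2 * x ^ 10 + 675 * x ^ 4 * t2 ^ 2
      - 1350 * x * t2 ^ 3)
    / (x ^ 6 + 45 * x * t3 - 15 * t2 * x ^ 3 - 45 * t2 ^ 2) ^ 2

open Topology
open Function (update update_of_ne update_eq_self)

namespace MvPolynomial

variable {ι : Type*}

theorem pderiv_ofNat {R : Type*} [CommSemiring R] (i : ι) (n : ℕ) [n.AtLeastTwo] :
    pderiv i (no_index (OfNat.ofNat n : MvPolynomial ι R)) = 0 :=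
  (pderiv i).map_natCast n

/-- `∂ᵢ (p / τ ^ n) = pderivDivPowNum i τ n p / τ ^ (n + 1)`, and iterating,
`∂ᵢᵏ (p / τ ^ n) = iteratedPderivDivPowNum i τ n p k / τ ^ (n + k)`. -/
noncomputable def pderivDivPowNum {R : Type*} [CommRing R] (i : ι) (τ : MvPolynomial ι R) (n : ℕ)
    (p : MvPolynomial ι R) : MvPolynomial ι R :=
  pderiv i p * τ - n * pderiv i τ * p

noncomputable def iteratedPderivDivPowNum {R : Type*} [CommRing R] (i : ι) (τ : MvPolynomial ι R)
    (n : ℕ) (p : MvPolynomial ι R) : ℕ → MvPolynomial ι R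
  | 0 => p
  | k + 1 => pderivDivPowNum i τ (n + k) (iteratedPderivDivPowNum i τ n p k)

variable [DecidableEq ι]

theorem hasDerivAt_eval_update (p : MvPolynomial ι ℝ) (v : ι → ℝ) (i : ι) (s : ℝ) :
    HasDerivAt (fun t => eval (update v i t) p) (eval (update v i s) (pderiv i p)) s := by
  induction p using MvPolynomial.induction_on with
  | C a => simpa using hasDerivAt_const s a
  | add p q hp hq => simpa using hp.fun_add hq
  | mul_X p j hp =>
    by_cases hj : j = i
    · subst hj
      have hline : (fun t => eval (update v j t) (p * X j)) = fun t => eval (update v j t) p * t := by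
        simp
      rw [hline]
      refine (hp.fun_mul (hasDerivAt_id' s)).congr_deriv ?_
      simp only [mul_one, Derivation.leibniz, pderiv_X, Pi.single_eq_same, smul_eq_mul, map_add,
        map_mul, eval_X, Function.update_self]
      ring
    · have hline : (fun t => eval (update v i t) (p * X j)) = fun t => eval (update v i t) p * v j := by
        simp [update_of_ne hj]
      rw [hline]
      refine (hp.mul_const (v j)).congr_deriv ?_
      simp [Derivation.leibniz, pderiv_X_of_ne hj, update_of_ne hj, mul_comm]

theorem continuous_eval_update (p : MvPolynomial ι ℝ) (v : ι → ℝ) (i : ι) :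
    Continuous fun t => eval (update v i t) p :=
  continuous_iff_continuousAt.2 fun s => (hasDerivAt_eval_update p v i s).continuousAt

theorem hasDerivAt_eval_update_div_pow (p τ : MvPolynomial ι ℝ) (n : ℕ) (v : ι → ℝ) (i : ι)
    {s : ℝ} (hτ : eval (update v i s) τ ≠ 0) :
    HasDerivAt (fun t => eval (update v i t) p / eval (update v i t) τ ^ n)
      (eval (update v i s) (pderivDivPowNum i τ n p) / eval (update v i s) τ ^ (n + 1)) s := by
  refine ((hasDerivAt_eval_update p v i s).div ((hasDerivAt_eval_update τ v i s).fun_pow n)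
    (pow_ne_zero n hτ)).congr_deriv ?_
  rcases n with _ | n
  · simp [pderivDivPowNum, hτ]
  · simp only [pderivDivPowNum, map_sub, map_mul, map_natCast, Nat.add_sub_cancel]
    field_simp
    ring

theorem iteratedDeriv_eval_update_div_pow (p τ : MvPolynomial ι ℝ) (n k : ℕ) (v : ι → ℝ)
    (i : ι) {s : ℝ} (hτ : eval (update v i s) τ ≠ 0) :
    iteratedDeriv k (fun t => eval (update v i t) p / eval (update v i t) τ ^ n) s
      = eval (update v i s) (iteratedPderivDivPowNum i τ n p k)
          / eval (update v i s) τ ^ (n + k) := by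
  induction k generalizing s with
  | zero => simp [iteratedPderivDivPowNum]
  | succ k ih =>
    have hnhds : ∀ᶠ t in 𝓝 s, eval (update v i t) τ ≠ 0 :=
      (continuous_eval_update τ v i).continuousAt.eventually_ne hτ
    have heq : iteratedDeriv k (fun t => eval (update v i t) p / eval (update v i t) τ ^ n)
        =ᶠ[𝓝 s] fun t => eval (update v i t) (iteratedPderivDivPowNum i τ n p k)
          / eval (update v i t) τ ^ (n + k) :=
      hnhds.mono fun t ht => ih ht
    rw [iteratedDeriv_succ, heq.deriv_eq, ← add_assoc]
    exact (hasDerivAt_eval_update_div_pow _ τ (n + k) v i hτ).deriv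

end MvPolynomial

open MvPolynomial

/-- The variables `x, t₂, t₃` are `X 0, X 1, X 2`. -/
noncomputable def kdvTau : MvPolynomial (Fin 3) ℝ :=
  X 0 ^ 6 + 45 * X 0 * X 2 - 15 * X 1 * X 0 ^ 3 - 45 * X 1 ^ 2

noncomputable def kdvNum : MvPolynomial (Fin 3) ℝ :=
  pderiv 0 (pderiv 0 kdvTau) * kdvTau - pderiv 0 kdvTau ^ 2

theorem qsol_eq_eval (v : Fin 3 → ℝ) :
    qsol (v 0) (v 1) (v 2) = eval v kdvNum / eval v kdvTau ^ 2 := by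
  simp [qsol, kdvNum, kdvTau, Derivation.leibniz, Derivation.leibniz_pow, pderiv_X, pderiv_ofNat]
  ring

section

variable {x t2 t3 : ℝ}

theorem iteratedDeriv_qsol_x (k : ℕ) (h : eval ![x, t2, t3] kdvTau ≠ 0) :
    iteratedDeriv k (fun y => qsol y t2 t3) x
      = eval ![x, t2, t3] (iteratedPderivDivPowNum 0 kdvTau 2 kdvNum k)
          / eval ![x, t2, t3] kdvTau ^ (2 + k) := by
  have hline : (fun y => qsol y t2 t3) = fun y => eval (update ![x, t2, t3] 0 y) kdvNum
      / eval (update ![x, t2, t3] 0 y) kdvTau ^ 2 := by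
    funext y
    rw [← qsol_eq_eval]
    simp [update]
  have hx : update ![x, t2, t3] 0 x = ![x, t2, t3] := update_eq_self 0 _
  rw [hline, iteratedDeriv_eval_update_div_pow _ _ _ _ _ _ (by rwa [hx]), hx]

theorem deriv_qsol_t2 (h : eval ![x, t2, t3] kdvTau ≠ 0) :
    deriv (fun s => qsol x s t3) t2
      = eval ![x, t2, t3] (pderivDivPowNum 1 kdvTau 2 kdvNum) / eval ![x, t2, t3] kdvTau ^ 3 := by
  have hline : (fun s => qsol x s t3) = fun s => eval (update ![x, t2, t3] 1 s) kdvNum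
      / eval (update ![x, t2, t3] 1 s) kdvTau ^ 2 := by
    funext s
    rw [← qsol_eq_eval]
    simp [update]
  have ht : update ![x, t2, t3] 1 t2 = ![x, t2, t3] := update_eq_self 1 _
  rw [hline, (hasDerivAt_eval_update_div_pow _ _ _ _ _ (by rwa [ht])).deriv, ht]

theorem deriv_qsol_t3 (h : eval ![x, t2, t3] kdvTau ≠ 0) :
    deriv (fun s => qsol x t2 s) t3
      = eval ![x, t2, t3] (pderivDivPowNum 2 kdvTau 2 kdvNum) / eval ![x, t2, t3] kdvTau ^ 3 := by
  have hline : (fun s => qsol x t2 s) = fun s => eval (update ![x, t2, t3] 2 s) kdvNum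
      / eval (update ![x, t2, t3] 2 s) kdvTau ^ 2 := by
    funext s
    rw [← qsol_eq_eval]
    simp [update]
  have ht : update ![x, t2, t3] 2 t3 = ![x, t2, t3] := update_eq_self 2 _
  rw [hline, (hasDerivAt_eval_update_div_pow _ _ _ _ _ (by rwa [ht])).deriv, ht]

end

theorem kdv2_numerator_identity :
    4 * pderivDivPowNum 1 kdvTau 2 kdvNum * kdvTau ^ 2
      = iteratedPderivDivPowNum 0 kdvTau 2 kdvNum 3
        + 12 * kdvNum * iteratedPderivDivPowNum 0 kdvTau 2 kdvNum 1 := by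
  simp [iteratedPderivDivPowNum, pderivDivPowNum, kdvNum, kdvTau, Derivation.leibniz,
    Derivation.leibniz_pow, pderiv_X, pderiv_ofNat]
  ring

theorem kdv3_numerator_identity :
    16 * pderivDivPowNum 2 kdvTau 2 kdvNum * kdvTau ^ 4
      = iteratedPderivDivPowNum 0 kdvTau 2 kdvNum 5
        + 40 * iteratedPderivDivPowNum 0 kdvTau 2 kdvNum 1
          * iteratedPderivDivPowNum 0 kdvTau 2 kdvNum 2
        + 20 * kdvNum * iteratedPderivDivPowNum 0 kdvTau 2 kdvNum 3
        + 120 * kdvNum ^ 2 * iteratedPderivDivPowNum 0 kdvTau 2 kdvNum 1 := by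
  have hsucc (k : ℕ) : iteratedPderivDivPowNum 0 kdvTau 2 kdvNum (k + 1)
      = pderivDivPowNum 0 kdvTau (2 + k) (iteratedPderivDivPowNum 0 kdvTau 2 kdvNum k) := rfl
  -- Normalizing each numerator before differentiating it again keeps the expressions small.
  have e1 := hsucc 0
  conv at e1 => rhs; simp [iteratedPderivDivPowNum, pderivDivPowNum, kdvNum, kdvTau,
    Derivation.leibniz, Derivation.leibniz_pow, pderiv_X, pderiv_ofNat]; ring_nf
  have e2 := hsucc 1
  rw [e1] at e2
  conv at e2 => rhs; simp [pderivDivPowNum, kdvTau, Derivation.leibniz, Derivation.leibniz_pow,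
    pderiv_X, pderiv_ofNat]; ring_nf
  have e3 := hsucc 2
  rw [e2] at e3
  conv at e3 => rhs; simp [pderivDivPowNum, kdvTau, Derivation.leibniz, Derivation.leibniz_pow,
    pderiv_X, pderiv_ofNat]; ring_nf
  have e4 := hsucc 3
  rw [e3] at e4
  conv at e4 => rhs; simp [pderivDivPowNum, kdvTau, Derivation.leibniz, Derivation.leibniz_pow,
    pderiv_X, pderiv_ofNat]; ring_nf
  have e5 := hsucc 4
  rw [e4] at e5
  conv at e5 => rhs; simp [pderivDivPowNum, kdvTau, Derivation.leibniz, Derivation.leibniz_pow,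
    pderiv_X, pderiv_ofNat]; ring_nf
  rw [e5, e3, e2, e1]
  simp [pderivDivPowNum, kdvNum, kdvTau, Derivation.leibniz, Derivation.leibniz_pow, pderiv_X,
    pderiv_ofNat]
  ring

/-- On the set where `x⁶ + 45xt₃ − 15t₂x³ − 45t₂² ≠ 0`, the rational function `qsol`
simultaneously solves the second and the third KdV flows. -/
theorem rational_solution_kdv_flows :
    ∀ x t2 t3 : ℝ, x ^ 6 + 45 * x * t3 - 15 * t2 * x ^ 3 - 45 * t2 ^ 2 ≠ 0 →
      (deriv (fun s => qsol x s t3) t2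
        = (1 / 4) * iteratedDeriv 3 (fun y => qsol y t2 t3) x
          + 3 * qsol x t2 t3 * deriv (fun y => qsol y t2 t3) x)
      ∧ (deriv (fun s => qsol x t2 s) t3
        = (1 / 16) * iteratedDeriv 5 (fun y => qsol y t2 t3) x
          + (5 / 2) * deriv (fun y => qsol y t2 t3) x
              * iteratedDeriv 2 (fun y => qsol y t2 t3) x
          + (5 / 4) * qsol x t2 t3 * iteratedDeriv 3 (fun y => qsol y t2 t3) x
          + (15 / 2) * qsol x t2 t3 ^ 2 * deriv (fun y => qsol y t2 t3) x) := by
  intro x t2 t3 h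
  have hτ : eval ![x, t2, t3] kdvTau ≠ 0 := by simpa [kdvTau] using h
  have h2 := congrArg (eval ![x, t2, t3]) kdv2_numerator_identity
  have h3 := congrArg (eval ![x, t2, t3]) kdv3_numerator_identity
  simp only [map_add, map_mul, map_pow, map_ofNat] at h2 h3
  have hq : qsol x t2 t3 = eval ![x, t2, t3] kdvNum / eval ![x, t2, t3] kdvTau ^ 2 :=
    qsol_eq_eval ![x, t2, t3]
  rw [deriv_qsol_t2 hτ, deriv_qsol_t3 hτ, ← iteratedDeriv_one, hq]
  simp only [iteratedDeriv_qsol_x _ hτ]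
  constructor
  · field_simp
    linear_combination eval ![x, t2, t3] kdvTau ^ 6 * h2
  · field_simp
    linear_combination 8 * eval ![x, t2, t3] kdvTau ^ 16 * h3
end

section
/- Let q_1, q_2 : ℝ² → ℝ be smooth functions of (x, t_2) satisfying the two-component cKdV system with α = 0: ∂q_1/∂t_2 = ∂_x q_2 and ∂q_2/∂t_2 = 2q_2 ∂_x q_1 + 4q_1 ∂_x q_2 − 6q_1² ∂_x q_1 + (1/4)∂_x³ q_1. Define u_1 := 2q_1 and u_2 := 2q_2 − 3q_1². Then (u_1,u_2) satisfies the Antonowicz–Fordy form of the second flow: ∂u_1/∂t_2 = ∂_x u_2 + (3/2)u_1 ∂_x u_1 and ∂u_2/∂t_2 = u_2 ∂_x u_1 + (1/2)u_1 ∂_x u_2 + (1/4)∂_x³ u_1. -/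
private lemma itd_const_mul (c : ℝ) : ∀ (n : ℕ) (f : ℝ → ℝ), ContDiff ℝ (⊤ : ℕ∞) f →
    iteratedDeriv n (fun y => c * f y) = fun y => c * iteratedDeriv n f y := by
  intro n
  induction n with
  | zero => intro f hf; simp
  | succ n ih =>
    intro f hf
    have hdf : deriv (fun y => c * f y) = fun y => c * deriv f y :=
      funext fun y => deriv_const_mul c (hf.differentiable (by norm_num) y)
    rw [iteratedDeriv_succ', hdf, ih _ ((contDiff_infty_iff_deriv.mp hf).2),
      ← iteratedDeriv_succ']

/-- If `(q₁,q₂)` is a smooth solution of the two-component cKdV system with `α = 0`,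
then `u₁ = 2q₁`, `u₂ = 2q₂ − 3q₁²` satisfies the Antonowicz–Fordy form of the flow:
`u_{1,t₂} = u_{2,x} + (3/2)u₁u_{1,x}` and
`u_{2,t₂} = u₂u_{1,x} + (1/2)u₁u_{2,x} + (1/4)u_{1,xxx}`. -/
theorem ckdv_alpha0_to_antonowicz_fordy (q1 q2 u1 u2 : ℝ → ℝ → ℝ)
    (hq1 : ContDiff ℝ (⊤ : ℕ∞) (fun p : ℝ × ℝ => q1 p.1 p.2))
    (hq2 : ContDiff ℝ (⊤ : ℕ∞) (fun p : ℝ × ℝ => q2 p.1 p.2))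
    (hflow1 : ∀ x t : ℝ, deriv (fun s => q1 x s) t = deriv (fun y => q2 y t) x)
    (hflow2 : ∀ x t : ℝ, deriv (fun s => q2 x s) t
      = 2 * q2 x t * deriv (fun y => q1 y t) x
        + 4 * q1 x t * deriv (fun y => q2 y t) x
        - 6 * q1 x t ^ 2 * deriv (fun y => q1 y t) x
        + (1 / 4) * iteratedDeriv 3 (fun y => q1 y t) x)
    (hu1 : ∀ x t : ℝ, u1 x t = 2 * q1 x t)
    (hu2 : ∀ x t : ℝ, u2 x t = 2 * q2 x t - 3 * q1 x t ^ 2) :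
    ∀ x t : ℝ,
      (deriv (fun s => u1 x s) t
        = deriv (fun y => u2 y t) x + (3 / 2) * u1 x t * deriv (fun y => u1 y t) x)
      ∧ (deriv (fun s => u2 x s) t
        = u2 x t * deriv (fun y => u1 y t) x
          + (1 / 2) * u1 x t * deriv (fun y => u2 y t) x
          + (1 / 4) * iteratedDeriv 3 (fun y => u1 y t) x) := by
  intro x t
  -- smoothness of sections
  have hq1x : ContDiff ℝ (⊤ : ℕ∞) (fun y => q1 y t) :=
    hq1.comp (contDiff_id.prodMk contDiff_const)
  have hq2x : ContDiff ℝ (⊤ : ℕ∞) (fun y => q2 y t) :=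
    hq2.comp (contDiff_id.prodMk contDiff_const)
  have hq1t : ContDiff ℝ (⊤ : ℕ∞) (fun s => q1 x s) :=
    hq1.comp (contDiff_const.prodMk contDiff_id)
  have hq2t : ContDiff ℝ (⊤ : ℕ∞) (fun s => q2 x s) :=
    hq2.comp (contDiff_const.prodMk contDiff_id)
  have dq1x : DifferentiableAt ℝ (fun y => q1 y t) x := (hq1x.differentiable (by simp)) x
  have dq2x : DifferentiableAt ℝ (fun y => q2 y t) x := (hq2x.differentiable (by simp)) x
  have dq1t : DifferentiableAt ℝ (fun s => q1 x s) t := (hq1t.differentiable (by simp)) t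
  have dq2t : DifferentiableAt ℝ (fun s => q2 x s) t := (hq2t.differentiable (by simp)) t
  -- rewrite u1, u2 as functions
  have hu1t : (fun s => u1 x s) = fun s => 2 * q1 x s := funext fun s => hu1 x s
  have hu1x : (fun y => u1 y t) = fun y => 2 * q1 y t := funext fun y => hu1 y t
  have hu2t : (fun s => u2 x s) = fun s => 2 * q2 x s - 3 * q1 x s ^ 2 :=
    funext fun s => hu2 x s
  have hu2x : (fun y => u2 y t) = fun y => 2 * q2 y t - 3 * q1 y t ^ 2 :=
    funext fun y => hu2 y t
  -- derivatives
  have du1t : deriv (fun s => u1 x s) t = 2 * deriv (fun s => q1 x s) t := by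
    rw [hu1t]; exact deriv_const_mul 2 dq1t
  have du1x : deriv (fun y => u1 y t) x = 2 * deriv (fun y => q1 y t) x := by
    rw [hu1x]; exact deriv_const_mul 2 dq1x
  have du2x : deriv (fun y => u2 y t) x
      = 2 * deriv (fun y => q2 y t) x - 6 * q1 x t * deriv (fun y => q1 y t) x := by
    rw [hu2x]
    have h1 : HasDerivAt (fun y => q1 y t) (deriv (fun y => q1 y t) x) x := dq1x.hasDerivAt
    have h2 : HasDerivAt (fun y => q2 y t) (deriv (fun y => q2 y t) x) x := dq2x.hasDerivAt
    have : HasDerivAt (fun y => 2 * q2 y t - 3 * q1 y t ^ 2)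
        (2 * deriv (fun y => q2 y t) x
          - 3 * (2 * q1 x t ^ 1 * deriv (fun y => q1 y t) x)) x :=
      ((h2.const_mul 2).sub ((h1.pow 2).const_mul 3))
    rw [this.deriv]; ring
  have du2t : deriv (fun s => u2 x s) t
      = 2 * deriv (fun s => q2 x s) t - 6 * q1 x t * deriv (fun s => q1 x s) t := by
    rw [hu2t]
    have h1 : HasDerivAt (fun s => q1 x s) (deriv (fun s => q1 x s) t) t := dq1t.hasDerivAt
    have h2 : HasDerivAt (fun s => q2 x s) (deriv (fun s => q2 x s) t) t := dq2t.hasDerivAt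
    have : HasDerivAt (fun s => 2 * q2 x s - 3 * q1 x s ^ 2)
        (2 * deriv (fun s => q2 x s) t
          - 3 * (2 * q1 x t ^ 1 * deriv (fun s => q1 x s) t)) t :=
      ((h2.const_mul 2).sub ((h1.pow 2).const_mul 3))
    rw [this.deriv]; ring
  have ditd : iteratedDeriv 3 (fun y => u1 y t) x
      = 2 * iteratedDeriv 3 (fun y => q1 y t) x := by
    rw [hu1x, itd_const_mul 2 3 _ (hq1x.of_le (by simp))]
  constructor
  · rw [du1t, du1x, du2x, hflow1, hu1]; ring
  · rw [du2t, du1x, du2x, ditd, hflow1, hflow2, hu1, hu2]; ring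
end
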